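/- arXiv:1305.2116 — 3 statements merged into one kernel-verified Lean document; each statement's English description precedes it below -/
import Mathlib

section
/- Let m ≥ 0 and j ≥ 1 be integers and let α and β be partitions such that every part of α is at most m+j, every part of β is at most j, β_1 = j, every part of β is at least 2, α_1 = m+j > α_2, and ℓ(β) ≥ ℓ(α) + 1. Then there exists an integer k with 1 ≤ k ≤ ℓ(α) such that α_{k+1} ≤ β_k − 1 and α_k ≥ β_{k+1} − 1. -/
/-!
Take the least `k ≥ 1` with `α_{k+1} < β_k`; it exists and is at most `ℓ(α)` because
`α_{ℓ(α)+1} = 0 < 2 ≤ β_{ℓ(α)}`. Minimality gives `β_{k-1} ≤ α_k` when `k ≥ 2`, and for `k = 1`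
we have `β_1 = j ≤ m + j = α_1`; since `β` is weakly decreasing, `β_{k+1} ≤ α_k` in both cases.
-/

noncomputable section

/-- The i-th largest part (1-indexed) of a partition, represented as a
multiset of parts; `0` if `i` exceeds the number of parts. -/
def partAt (mu : Multiset ℕ) (i : ℕ) : ℕ :=
  (mu.sort (· ≥ ·)).getD (i - 1) 0

lemma partAt_eq_zero_of_card_lt (mu : Multiset ℕ) {i : ℕ} (h : Multiset.card mu < i) :
    partAt mu i = 0 :=
  List.getD_eq_default _ _ (by rw [Multiset.length_sort]; omega)

lemma partAt_mem (mu : Multiset ℕ) {i : ℕ} (h1 : 1 ≤ i) (h2 : i ≤ Multiset.card mu) :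
    partAt mu i ∈ mu := by
  have hlt : i - 1 < (mu.sort (· ≥ ·)).length := by rw [Multiset.length_sort]; omega
  rw [partAt, List.getD_eq_getElem _ _ hlt, ← Multiset.mem_sort (· ≥ ·)]
  exact List.getElem_mem hlt

lemma antitone_partAt (mu : Multiset ℕ) : Antitone (partAt mu) := by
  intro i i' h
  have hsorted : (mu.sort (· ≥ ·)).Pairwise (· ≥ ·) := Multiset.pairwise_sort _ _
  unfold partAt
  by_cases hb : i' - 1 < (mu.sort (· ≥ ·)).length
  · have ha : i - 1 < (mu.sort (· ≥ ·)).length := by omega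
    rw [List.getD_eq_getElem _ _ hb, List.getD_eq_getElem _ _ ha]
    rcases (show i - 1 ≤ i' - 1 by omega).eq_or_lt with heq | hlt
    · simp only [heq, le_refl]
    · exact List.pairwise_iff_getElem.mp hsorted _ _ ha hb hlt
  · rw [List.getD_eq_default _ _ (by omega)]
    exact Nat.zero_le _

lemma exists_crossing_of_antitone {α : Type*} [LinearOrder α] {a b : ℕ → α} (hb : Antitone b)
    (hstart : b 1 ≤ a 1) {L : ℕ} (hL : 1 ≤ L) (hend : a (L + 1) < b L) :
    ∃ k, 1 ≤ k ∧ k ≤ L ∧ a (k + 1) < b k ∧ b (k + 1) ≤ a k := by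
  induction L, hL using Nat.le_induction with
  | base => exact ⟨1, le_rfl, le_rfl, hend, (hb (by omega)).trans hstart⟩
  | succ L hL ih =>
    by_cases hprev : a (L + 1) < b L
    · obtain ⟨k, hk1, hkL, hk⟩ := ih hprev
      exact ⟨k, hk1, hkL.trans L.le_succ, hk⟩
    · exact ⟨L + 1, by omega, le_rfl, hend, (hb (by omega)).trans (not_lt.mp hprev)⟩

theorem exists_k_general (m j : ℕ) (hj : 1 ≤ j) (alpha beta : Multiset ℕ)
    (hbeta1 : partAt beta 1 = j) (hbeta2 : ∀ x ∈ beta, 2 ≤ x)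
    (halpha1 : partAt alpha 1 = m + j)
    (hlen : Multiset.card alpha + 1 ≤ Multiset.card beta) :
    ∃ k : ℕ, 1 ≤ k ∧ k ≤ Multiset.card alpha ∧
      (partAt alpha (k + 1) : ℤ) ≤ (partAt beta k : ℤ) - 1 ∧
      (partAt beta (k + 1) : ℤ) - 1 ≤ (partAt alpha k : ℤ) := by
  have hL : 1 ≤ Multiset.card alpha := by
    by_contra h
    have := partAt_eq_zero_of_card_lt alpha (i := 1) (by omega)
    omega
  have hend : partAt alpha (Multiset.card alpha + 1) < partAt beta (Multiset.card alpha) := by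
    rw [partAt_eq_zero_of_card_lt alpha (by omega)]
    exact lt_of_lt_of_le two_pos (hbeta2 _ (partAt_mem beta hL (by omega)))
  obtain ⟨k, hk1, hkL, hcross, hinterlace⟩ :=
    exists_crossing_of_antitone (antitone_partAt beta) (by omega) hL hend
  exact ⟨k, hk1, hkL, by omega, by omega⟩

/-- If m ≥ 0, j ≥ 1, α and β are partitions with parts of α at most m+j,
parts of β at most j, β₁ = j, all parts of β at least 2, α₁ = m+j > α₂,
and ℓ(β) ≥ ℓ(α) + 1, then there is k with 1 ≤ k ≤ ℓ(α),
α_{k+1} ≤ β_k - 1 and α_k ≥ β_{k+1} - 1. -/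
theorem exists_k (m j : ℕ) (hj : 1 ≤ j) (alpha beta : Multiset ℕ)
    (halpha_pos : ∀ x ∈ alpha, 0 < x) (hbeta_pos : ∀ x ∈ beta, 0 < x)
    (halpha_le : ∀ x ∈ alpha, x ≤ m + j) (hbeta_le : ∀ x ∈ beta, x ≤ j)
    (hbeta1 : partAt beta 1 = j) (hbeta2 : ∀ x ∈ beta, 2 ≤ x)
    (halpha1 : partAt alpha 1 = m + j) (halpha12 : partAt alpha 2 < m + j)
    (hlen : Multiset.card alpha + 1 ≤ Multiset.card beta) :
    ∃ k : ℕ, 1 ≤ k ∧ k ≤ Multiset.card alpha ∧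
      (partAt alpha (k + 1) : ℤ) ≤ (partAt beta k : ℤ) - 1 ∧
      (partAt beta (k + 1) : ℤ) - 1 ≤ (partAt alpha k : ℤ) :=
  exists_k_general m j hj alpha beta hbeta1 hbeta2 halpha1 hlen
end
end

section
/- For all integers m ≥ 0 and n ≥ 0, the number of elements of Q_2(m,n) is at most the number of elements of P_2(−m,n). -/
/-!
Move the first column of the Young diagram of β over to α:
(j, α, β) ↦ (j, γ, δ) with γ = α with a column of length ℓ(β) prepended and δ = β with its first
column removed. The size is unchanged, β₁ = j turns into δ₁ = j - 1, α₁ < m + j keeps the parts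
of γ at most m + j, and ℓ(α) ≤ ℓ(β) makes the column fit, with ℓ(δ) ≤ ℓ(β) = ℓ(γ). The map is
undone by removing the first column of γ and giving δ back a column of length ℓ(γ), so it is an
injection of Q₂(m,n) into the finite set P₂(-m,n).
-/

noncomputable section

/-- The smallest part of a partition, with the convention that the smallest
part of the empty partition is `+∞`. -/
def sMin (mu : Multiset ℕ) : ℕ∞ := (mu.map ((↑) : ℕ → ℕ∞)).inf

/-- Q₂(m,n): triples (j, α, β) with j ≥ 1, parts of α at most m+j, parts of
β at most j, |α|+|β|+j(m+j) = n, β₁ = j, α₁ < m+j and ℓ(β) ≥ ℓ(α). -/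
def Q2 (m n : ℕ) : Set (ℕ × Multiset ℕ × Multiset ℕ) :=
  {x | 1 ≤ x.1 ∧ (∀ a ∈ x.2.1, 0 < a) ∧ (∀ a ∈ x.2.2, 0 < a) ∧
       (∀ a ∈ x.2.1, a ≤ m + x.1) ∧ (∀ a ∈ x.2.2, a ≤ x.1) ∧
       x.2.1.sum + x.2.2.sum + x.1 * (m + x.1) = n ∧
       partAt x.2.2 1 = x.1 ∧ partAt x.2.1 1 < m + x.1 ∧
       Multiset.card x.2.1 ≤ Multiset.card x.2.2}

/-- P₂(-m,n): triples (j', γ, δ) with j' ≥ 1, parts of γ at most m+j', parts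
of δ at most j', |γ|+|δ|+j'(m+j') = n, ℓ(δ) ≤ ℓ(γ) and δ₁ = j'-1. -/
def P2 (m n : ℕ) : Set (ℕ × Multiset ℕ × Multiset ℕ) :=
  {x | 1 ≤ x.1 ∧ (∀ a ∈ x.2.1, 0 < a) ∧ (∀ a ∈ x.2.2, 0 < a) ∧
       (∀ a ∈ x.2.1, a ≤ m + x.1) ∧ (∀ a ∈ x.2.2, a ≤ x.1) ∧
       x.2.1.sum + x.2.2.sum + x.1 * (m + x.1) = n ∧
       Multiset.card x.2.2 ≤ Multiset.card x.2.1 ∧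
       (partAt x.2.2 1 : ℤ) = (x.1 : ℤ) - 1}

open Multiset

lemma partAt_one_eq_sup (s : Multiset ℕ) : partAt s 1 = s.sup := by
  have hsorted := pairwise_sort s (· ≥ ·)
  conv_rhs => rw [← sort_eq s (· ≥ ·)]
  cases hl : s.sort (· ≥ ·) with
  | nil => simp [partAt, hl]
  | cons c t =>
    rw [hl, List.pairwise_cons] at hsorted
    simp only [partAt, hl, ← cons_coe, sup_cons, List.getD_cons_zero, Nat.sub_self]
    exact (max_eq_left (sup_le.2 fun b hb => hsorted.1 b (by simpa using hb))).symm

def addColumn (k : ℕ) (α : Multiset ℕ) : Multiset ℕ :=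
  α.map (· + 1) + replicate (k - card α) 1

def removeColumn (β : Multiset ℕ) : Multiset ℕ :=
  (β.filter (2 ≤ ·)).map (· - 1)

lemma mem_addColumn {k a : ℕ} {α : Multiset ℕ} (h : a ∈ addColumn k α) :
    a = 1 ∨ ∃ b ∈ α, a = b + 1 := by
  rcases mem_add.1 h with h | h
  · obtain ⟨b, hb, rfl⟩ := mem_map.1 h
    exact .inr ⟨b, hb, rfl⟩
  · exact .inl (eq_of_mem_replicate h)

lemma mem_removeColumn {a : ℕ} {β : Multiset ℕ} : a ∈ removeColumn β ↔ 0 < a ∧ a + 1 ∈ β := by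
  simp only [removeColumn, mem_map, mem_filter]
  constructor
  · rintro ⟨b, ⟨hb, h2⟩, rfl⟩
    exact ⟨by omega, by rwa [Nat.sub_add_cancel (by omega)]⟩
  · rintro ⟨ha, hb⟩
    exact ⟨a + 1, ⟨hb, by omega⟩, rfl⟩

lemma card_addColumn {k : ℕ} {α : Multiset ℕ} (h : card α ≤ k) : card (addColumn k α) = k := by
  simp only [addColumn, card_add, card_map, card_replicate]
  omega

lemma sum_addColumn {k : ℕ} {α : Multiset ℕ} (h : card α ≤ k) :
    (addColumn k α).sum = α.sum + k := by
  simp only [addColumn, sum_add, sum_map_add, map_const', sum_replicate, smul_eq_mul, mul_one,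
    map_id']
  omega

lemma card_removeColumn_le (β : Multiset ℕ) : card (removeColumn β) ≤ card β := by
  simpa [removeColumn] using card_le_card (filter_le _ β)

lemma removeColumn_addColumn {α : Multiset ℕ} (hα : ∀ a ∈ α, 0 < a) (k : ℕ) :
    removeColumn (addColumn k α) = α := by
  have hshift : (α.map (· + 1)).filter (2 ≤ ·) = α.map (· + 1) :=
    filter_eq_self.2 fun a ha => by obtain ⟨b, hb, rfl⟩ := mem_map.1 ha; have := hα b hb; omega
  have hones : (replicate (k - card α) 1).filter (2 ≤ ·) = 0 :=
    filter_eq_nil.2 fun a ha => by rw [eq_of_mem_replicate ha]; omega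
  simp [removeColumn, addColumn, filter_add, hshift, hones, map_map]

lemma addColumn_removeColumn {β : Multiset ℕ} (hβ : ∀ b ∈ β, 0 < b) :
    addColumn (card β) (removeColumn β) = β := by
  have hshift : (removeColumn β).map (· + 1) = β.filter (2 ≤ ·) := by
    rw [removeColumn, map_map]
    exact (map_congr rfl fun b hb => by have := of_mem_filter hb; simp; omega).trans (map_id' _)
  have hones : β.filter (¬ 2 ≤ ·) = replicate (card β - card (removeColumn β)) 1 := by
    refine eq_replicate.2 ⟨?_, fun b hb => ?_⟩
    · have := congrArg card (filter_add_not (2 ≤ ·) β)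
      simp only [card_add] at this
      simp only [removeColumn, card_map]
      omega
    · have := hβ b (mem_of_mem_filter hb); have := of_mem_filter hb; omega
  rw [addColumn, hshift, ← hones, filter_add_not]

lemma sum_removeColumn {β : Multiset ℕ} (hβ : ∀ b ∈ β, 0 < b) :
    (removeColumn β).sum + card β = β.sum := by
  conv_rhs => rw [← addColumn_removeColumn hβ]
  rw [sum_addColumn (card_removeColumn_le β)]

lemma sup_removeColumn (β : Multiset ℕ) : (removeColumn β).sup = β.sup - 1 := by
  induction β using Multiset.induction with
  | empty => simp [removeColumn]
  | cons a s ih =>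
    rw [removeColumn] at ih ⊢
    by_cases ha : 2 ≤ a
    · simp only [filter_cons_of_pos _ ha, map_cons, sup_cons, ih]
      omega
    · simp only [filter_cons_of_neg _ ha, sup_cons, ih]
      omega

lemma le_nsmul_range_of_sum_le {s : Multiset ℕ} {n : ℕ} (hs : ∀ a ∈ s, 0 < a)
    (hsum : s.sum ≤ n) : s ≤ n • range (n + 1) := by
  classical
  have hcard : card s ≤ n := by simpa using (card_nsmul_le_sum hs).trans hsum
  refine le_iff_count.2 fun a => ?_
  by_cases ha : a ∈ s
  · have han : a < n + 1 := Nat.lt_succ_of_le ((le_sum_of_mem ha).trans hsum)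
    rw [count_nsmul, count_eq_one_of_mem (nodup_range _) (mem_range.2 han), mul_one]
    exact (count_le_card a s).trans hcard
  · simp [count_eq_zero_of_notMem ha]

lemma finite_P2 (m n : ℕ) : (P2 m n).Finite := by
  refine ((Set.finite_Iic n).prod ((Set.finite_Iic (n • range (n + 1))).prod
    (Set.finite_Iic (n • range (n + 1))))).subset ?_
  rintro ⟨j, γ, δ⟩ hx
  obtain ⟨hj, hγ, hδ, -, -, hsum, -, -⟩ : 1 ≤ j ∧ _ := by
    simpa only [P2, Set.mem_ofPred_eq] using hx
  have : j ≤ j * (m + j) := Nat.le_mul_of_pos_right j (by omega)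
  simp only [Set.mem_prod, Set.mem_Iic]
  exact ⟨by omega, le_nsmul_range_of_sum_le hγ (by omega),
    le_nsmul_range_of_sum_le hδ (by omega)⟩

def moveColumn (x : ℕ × Multiset ℕ × Multiset ℕ) : ℕ × Multiset ℕ × Multiset ℕ :=
  (x.1, addColumn (card x.2.2) x.2.1, removeColumn x.2.2)

def unmoveColumn (x : ℕ × Multiset ℕ × Multiset ℕ) : ℕ × Multiset ℕ × Multiset ℕ :=
  (x.1, removeColumn x.2.1, addColumn (card x.2.1) x.2.2)

lemma leftInvOn_unmoveColumn_moveColumn (m n : ℕ) :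
    Set.LeftInvOn unmoveColumn moveColumn (Q2 m n) := by
  rintro ⟨j, α, β⟩ hx
  obtain ⟨-, hα, hβ, -, -, -, -, -, hcard⟩ : 1 ≤ j ∧ _ := by
    simpa only [Q2, Set.mem_ofPred_eq] using hx
  simp only [moveColumn, unmoveColumn, card_addColumn hcard, removeColumn_addColumn hα,
    addColumn_removeColumn hβ]

lemma mapsTo_moveColumn (m n : ℕ) : Set.MapsTo moveColumn (Q2 m n) (P2 m n) := by
  rintro ⟨j, α, β⟩ hx
  obtain ⟨hj, hα, hβ, hαle, hβle, hsum, hβ1, hα1, hcard⟩ : 1 ≤ j ∧ _ := by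
    simpa only [Q2, Set.mem_ofPred_eq] using hx
  rw [partAt_one_eq_sup] at hβ1 hα1
  simp only [moveColumn, P2, Set.mem_ofPred_eq]
  refine ⟨hj, fun a ha => ?_, fun a ha => (mem_removeColumn.1 ha).1, fun a ha => ?_,
    fun a ha => ?_, ?_, ?_, ?_⟩
  · rcases mem_addColumn ha with rfl | ⟨b, -, rfl⟩ <;> omega
  · rcases mem_addColumn ha with rfl | ⟨b, hb, rfl⟩
    · omega
    · have := le_sup hb; omega
  · have := hβle _ (mem_removeColumn.1 ha).2; omega
  · have := sum_removeColumn hβ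
    rw [sum_addColumn hcard]
    omega
  · rw [card_addColumn hcard]
    exact card_removeColumn_le β
  · simp only [partAt_one_eq_sup, sup_removeColumn]
    omega

/-- For all integers m ≥ 0 and n ≥ 0, #Q₂(m,n) ≤ #P₂(-m,n). -/
theorem Q2_card_le_P2_card (m n : ℕ) : Nat.card (Q2 m n) ≤ Nat.card (P2 m n) := by
  rw [Nat.card_coe_set_eq, Nat.card_coe_set_eq]
  exact Set.ncard_le_ncard_of_injOn moveColumn (mapsTo_moveColumn m n)
    (leftInvOn_unmoveColumn_moveColumn m n).injOn (finite_P2 m n)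
end
end

section
/- For all integers m ≥ 1 and n ≥ 0, the number of elements of Q_5(m,n) is at most the number of elements of P_5(−m,n). -/
noncomputable section

/-- Q₅(m,n): triples (j, α, β) with j ≥ 1, parts of α at most m+j, parts of
β at most j, |α|+|β|+j(m+j) = n, β₁ = j, ℓ(β) ≥ ℓ(α)+1,
α₁ = α₂ = m+j > α₃ and s(β) ≥ 2. -/
def Q5 (m n : ℕ) : Set (ℕ × Multiset ℕ × Multiset ℕ) :=
  {x | 1 ≤ x.1 ∧ (∀ a ∈ x.2.1, 0 < a) ∧ (∀ a ∈ x.2.2, 0 < a) ∧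
       (∀ a ∈ x.2.1, a ≤ m + x.1) ∧ (∀ a ∈ x.2.2, a ≤ x.1) ∧
       x.2.1.sum + x.2.2.sum + x.1 * (m + x.1) = n ∧
       partAt x.2.2 1 = x.1 ∧ Multiset.card x.2.1 + 1 ≤ Multiset.card x.2.2 ∧
       partAt x.2.1 1 = m + x.1 ∧ partAt x.2.1 2 = m + x.1 ∧
       partAt x.2.1 3 < m + x.1 ∧ 2 ≤ sMin x.2.2}

/-- P₅(-m,n): triples (j', γ, δ) with j' ≥ 1, parts of γ at most m+j', parts
of δ at most j', |γ|+|δ|+j'(m+j') = n, ℓ(γ) = ℓ(δ), γ₁ ≤ m+j'-3 and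
δ₁ = j'. -/
def P5 (m n : ℕ) : Set (ℕ × Multiset ℕ × Multiset ℕ) :=
  {x | 1 ≤ x.1 ∧ (∀ a ∈ x.2.1, 0 < a) ∧ (∀ a ∈ x.2.2, 0 < a) ∧
       (∀ a ∈ x.2.1, a ≤ m + x.1) ∧ (∀ a ∈ x.2.2, a ≤ x.1) ∧
       x.2.1.sum + x.2.2.sum + x.1 * (m + x.1) = n ∧
       Multiset.card x.2.1 = Multiset.card x.2.2 ∧
       (partAt x.2.1 1 : ℤ) ≤ (m : ℤ) + (x.1 : ℤ) - 3 ∧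
       partAt x.2.2 1 = x.1}

/-!
Write an element of `Q5 m n` as `(j, (m+j, m+j) ∪ A, (j) ∪ B)`: the parts of `A` are below
`m + j`, those of `B` lie in `[2, j]`, and `ℓ(B) ≥ ℓ(A) + 2`. Send it to `(j + 1, γ, δ)`, where
`γ` consists of the parts of `B` and the parts of `A` above `j`, each lowered by one, and `δ`
consists of `j + 1`, the parts of `A` at most `j`, each raised by one, and as many ones as make
`ℓ(γ) = ℓ(δ)`. Passing from `j` to `j + 1` costs `m + 2j + 1` in the weight; what remains after
the shifts is paid by a correction depending only on `m` (`padGamma`, `padDelta`, `deficit`).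
The map is injective because the ones of `δ` are exactly its parts below `2`, and in `γ` the
lowered parts of `B` are below `j` while the lowered parts of `A` are at least `j`.
-/

section PartAt

variable {μ : Multiset ℕ} {a v i : ℕ}

lemma le_partAt_one (ha : a ∈ μ) : a ≤ partAt μ 1 := by
  have hs := Multiset.pairwise_sort μ (· ≥ ·)
  rw [← Multiset.mem_sort (· ≥ ·)] at ha
  unfold partAt
  rcases hl : μ.sort (· ≥ ·) with _ | ⟨b, l⟩
  · simp [hl] at ha
  · rw [hl] at ha hs
    rcases List.mem_cons.mp ha with rfl | ha
    · simp
    · simpa using (List.pairwise_cons.mp hs).1 a ha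

lemma partAt_one_mem (h : 0 < partAt μ 1) : partAt μ 1 ∈ μ := by
  unfold partAt at h ⊢
  rcases hl : μ.sort (· ≥ ·) with _ | ⟨b, l⟩
  · simp [hl] at h
  · simpa using (Multiset.mem_sort (· ≥ ·)).mp (hl ▸ List.mem_cons_self)

lemma partAt_one_le (h : ∀ a ∈ μ, a ≤ v) : partAt μ 1 ≤ v := by
  rcases Nat.eq_zero_or_pos (partAt μ 1) with h0 | hpos
  · omega
  · exact h _ (partAt_one_mem hpos)

lemma cons_erase_of_partAt_one_eq (h : partAt μ 1 = v) (hv : 0 < v) : v ::ₘ μ.erase v = μ :=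
  Multiset.cons_erase (h ▸ partAt_one_mem (h ▸ hv))

lemma partAt_cons_succ (h : ∀ b ∈ μ, b ≤ a) (hi : 1 ≤ i) :
    partAt (a ::ₘ μ) (i + 1) = partAt μ i := by
  obtain ⟨k, rfl⟩ := Nat.exists_eq_add_of_le' hi
  simp [partAt, Multiset.sort_cons a μ (· ≥ ·) h]

lemma partAt_erase_of_partAt_one_eq (h : partAt μ 1 = v) (hv : 0 < v) (hi : 1 ≤ i) :
    partAt (μ.erase v) i = partAt μ (i + 1) := by
  conv_rhs => rw [← cons_erase_of_partAt_one_eq h hv]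
  exact (partAt_cons_succ (fun b hb => h ▸ le_partAt_one (Multiset.mem_of_mem_erase hb)) hi).symm

lemma natCast_le_sMin_iff {k : ℕ} : (k : ℕ∞) ≤ sMin μ ↔ ∀ a ∈ μ, k ≤ a := by
  simp [sMin, Multiset.le_inf]

end PartAt

lemma Multiset.map_succ_map_pred {s : Multiset ℕ} (h : ∀ a ∈ s, 0 < a) :
    (s.map (· - 1)).map (· + 1) = s := by
  rw [Multiset.map_map]
  conv_rhs => rw [← Multiset.map_id s]
  exact Multiset.map_congr rfl fun a ha => Nat.sub_add_cancel (h a ha)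

lemma Multiset.map_pred_injOn : Set.InjOn (Multiset.map (· - 1)) {s | ∀ a ∈ s, 0 < a} :=
  fun s hs t ht hst => by
    rw [← Multiset.map_succ_map_pred hs, ← Multiset.map_succ_map_pred ht, hst]

lemma Multiset.sum_map_pred_add_card {s : Multiset ℕ} (h : ∀ a ∈ s, 0 < a) :
    (s.map (· - 1)).sum + card s = s.sum := by
  conv_rhs => rw [← Multiset.map_succ_map_pred h]
  simp [Multiset.sum_map_add]

lemma finite_setOf_pos_sum_le (n : ℕ) :
    {s : Multiset ℕ | (∀ a ∈ s, 0 < a) ∧ s.sum ≤ n}.Finite := by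
  refine ((Set.finite_Iic n).biUnion fun k _ =>
    Set.finite_range (Nat.Partition.parts (n := k))).subset ?_
  rintro s ⟨hpos, hsum⟩
  simp only [Set.mem_iUnion]
  exact ⟨s.sum, hsum, ⟨s, hpos _, rfl⟩, rfl⟩

lemma P5_finite (m n : ℕ) : (P5 m n).Finite := by
  refine ((Set.finite_Iic n).prod
    ((finite_setOf_pos_sum_le n).prod (finite_setOf_pos_sum_le n))).subset ?_
  rintro ⟨j, γ, δ⟩ ⟨hj, hγ, hδ, -, -, hsum, -⟩
  dsimp only at hj hsum
  have : j ≤ j * (m + j) := Nat.le_mul_of_pos_right j (by omega)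
  exact ⟨Set.mem_Iic.mpr (by omega), ⟨hγ, show γ.sum ≤ n by omega⟩, ⟨hδ, show δ.sum ≤ n by omega⟩⟩

def padGamma : ℕ → Multiset ℕ
  | m + 3 => {m + 1}
  | _ => 0

def padDelta : ℕ → Multiset ℕ
  | 2 => {2}
  | _ => 0

def deficit : ℕ → ℕ
  | 1 => 1
  | 2 => 2
  | _ => 0

section Padding

variable {m : ℕ}

lemma pos_and_add_two_le_of_mem_padGamma {c : ℕ} (hc : c ∈ padGamma m) : 0 < c ∧ c + 2 ≤ m := by
  match m, hc with
  | m + 3, hc => simp only [padGamma, Multiset.mem_singleton] at hc; omega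

lemma eq_two_of_mem_padDelta {d : ℕ} (hd : d ∈ padDelta m) : d = 2 := by
  match m, hd with
  | 2, hd => simpa [padDelta] using hd

lemma deficit_le_two : deficit m ≤ 2 := by
  unfold deficit; split <;> omega

lemma card_padGamma_add_deficit (hm : 1 ≤ m) :
    Multiset.card (padGamma m) + deficit m = Multiset.card (padDelta m) + 1 := by
  match m, hm with
  | 1, _ | 2, _ | m + 3, _ => simp [padGamma, padDelta, deficit]

lemma sum_padGamma_add_sum_padDelta (hm : 1 ≤ m) :
    (padGamma m).sum + (padDelta m).sum + 2 = m + deficit m := by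
  match m, hm with
  | 1, _ | 2, _ | m + 3, _ => simp [padGamma, padDelta, deficit]

end Padding

section Construction

variable (m j : ℕ) (A B : Multiset ℕ)

def onesCount : ℕ :=
  Multiset.card B + Multiset.card (A.filter (j < ·)) - Multiset.card (A.filter (· ≤ j))
    - deficit m

def gamma : Multiset ℕ :=
  (B + A.filter (j < ·)).map (· - 1) + padGamma m

def delta : Multiset ℕ :=
  (j + 1) ::ₘ ((A.filter (· ≤ j)).map (· + 1) + padDelta m
    + Multiset.replicate (onesCount m j A B) 1)

structure IsQ5Core (n : ℕ) : Prop where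
  one_le : 1 ≤ j
  pos_of_mem_A : ∀ a ∈ A, 0 < a
  lt_of_mem_A : ∀ a ∈ A, a < m + j
  two_le_of_mem_B : ∀ b ∈ B, 2 ≤ b
  le_of_mem_B : ∀ b ∈ B, b ≤ j
  card_add_two_le : Multiset.card A + 2 ≤ Multiset.card B
  sum_eq : A.sum + B.sum + 2 * (m + j) + j + j * (m + j) = n

lemma filter_lt_add_filter_le : A.filter (j < ·) + A.filter (· ≤ j) = A := by
  conv_rhs => rw [← Multiset.filter_add_not (j < ·) A]
  simp only [not_lt]

lemma card_gamma : Multiset.card (gamma m j A B) =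
    Multiset.card B + Multiset.card (A.filter (j < ·)) + Multiset.card (padGamma m) := by
  simp [gamma]

lemma card_delta : Multiset.card (delta m j A B) =
    Multiset.card (A.filter (· ≤ j)) + Multiset.card (padDelta m) + onesCount m j A B + 1 := by
  simp [delta]

lemma sum_delta : (delta m j A B).sum = j + 1 + (A.filter (· ≤ j)).sum
    + Multiset.card (A.filter (· ≤ j)) + (padDelta m).sum + onesCount m j A B := by
  simp only [delta, Multiset.sum_cons, Multiset.sum_add, Multiset.sum_map_add, Multiset.map_id',
    Multiset.map_const', Multiset.sum_replicate, smul_eq_mul, mul_one]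
  ring

variable {m j A B}

lemma sum_gamma (hpos : ∀ c ∈ B + A.filter (j < ·), 0 < c) :
    (gamma m j A B).sum + Multiset.card B + Multiset.card (A.filter (j < ·)) =
      B.sum + (A.filter (j < ·)).sum + (padGamma m).sum := by
  have := Multiset.sum_map_pred_add_card hpos
  simp only [Multiset.card_add, Multiset.sum_add] at this
  simp only [gamma, Multiset.sum_add]
  omega

namespace IsQ5Core

variable {n : ℕ}

lemma pos_and_le_of_mem_B (h : IsQ5Core m j A B n) : ∀ b ∈ B, 0 < b ∧ b ≤ j :=
  fun b hb => ⟨by have := h.two_le_of_mem_B b hb; omega, h.le_of_mem_B b hb⟩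

lemma gamma_bounds (h : IsQ5Core m j A B n) (hm : 1 ≤ m) :
    ∀ c ∈ gamma m j A B, 0 < c ∧ c + 2 ≤ m + j := by
  intro c hc
  simp only [gamma, Multiset.mem_add, Multiset.mem_map, Multiset.mem_filter] at hc
  rcases hc with ⟨b, hb | ⟨ha, hja⟩, rfl⟩ | hc
  · have := h.two_le_of_mem_B b hb; have := h.le_of_mem_B b hb; omega
  · have := h.lt_of_mem_A b ha; have := h.one_le; omega
  · have := pos_and_add_two_le_of_mem_padGamma hc; omega

lemma delta_bounds (h : IsQ5Core m j A B n) : ∀ d ∈ delta m j A B, 0 < d ∧ d ≤ j + 1 := by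
  intro d hd
  simp only [delta, Multiset.mem_cons, Multiset.mem_add, Multiset.mem_map, Multiset.mem_filter,
    Multiset.mem_replicate] at hd
  rcases hd with rfl | (⟨a, ⟨-, haj⟩, rfl⟩ | hd) | ⟨-, rfl⟩
  · omega
  · omega
  · have := eq_two_of_mem_padDelta hd; have := h.one_le; omega
  · omega

lemma mem_P5 (h : IsQ5Core m j A B n) (hm : 1 ≤ m) :
    (j + 1, gamma m j A B, delta m j A B) ∈ P5 m n := by
  have hγ := h.gamma_bounds hm
  have hδ := h.delta_bounds
  have hsplit := filter_lt_add_filter_le j A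
  have hcardA := congrArg Multiset.card hsplit
  have hsumA := congrArg Multiset.sum hsplit
  rw [Multiset.card_add] at hcardA
  rw [Multiset.sum_add] at hsumA
  -- no truncation in `onesCount`: `ℓ(B) ≥ ℓ(A) + 2 ≥ ℓ(A) + deficit m`
  have hones : onesCount m j A B + Multiset.card (A.filter (· ≤ j)) + deficit m =
      Multiset.card B + Multiset.card (A.filter (j < ·)) := by
    have := h.card_add_two_le
    have := deficit_le_two (m := m)
    unfold onesCount
    omega
  have hsumγ := sum_gamma (m := m) (j := j) (A := A) (B := B) fun c hc => by
    simp only [Multiset.mem_add, Multiset.mem_filter] at hc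
    rcases hc with hc | ⟨-, hc⟩
    · have := h.two_le_of_mem_B c hc; omega
    · omega
  have hcard_pad := card_padGamma_add_deficit hm
  have hsum_pad := sum_padGamma_add_sum_padDelta hm
  have hsum := h.sum_eq
  have hj := h.one_le
  refine ⟨by omega, fun c hc => (hγ c hc).1, fun d hd => (hδ d hd).1,
    fun c hc => by have := hγ c hc; omega, fun d hd => (hδ d hd).2, ?_, ?_, ?_, ?_⟩
  · have hmul : (j + 1) * (m + (j + 1)) = j * (m + j) + m + 2 * j + 1 := by ring
    show (gamma m j A B).sum + (delta m j A B).sum + (j + 1) * (m + (j + 1)) = n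
    rw [sum_delta, hmul]
    omega
  · show Multiset.card (gamma m j A B) = Multiset.card (delta m j A B)
    rw [card_gamma, card_delta]
    omega
  · have := partAt_one_le fun c hc => Nat.le_sub_of_add_le (hγ c hc).2
    show (partAt (gamma m j A B) 1 : ℤ) ≤ m + (j + 1 : ℕ) - 3
    omega
  · exact le_antisymm (partAt_one_le fun d hd => (hδ d hd).2)
      (le_partAt_one (Multiset.mem_cons_self _ _))

end IsQ5Core

end Construction

section Injectivity

variable {m j : ℕ} {A B A' B' : Multiset ℕ}

lemma filter_lt_map_pred (hB : ∀ b ∈ B, 0 < b ∧ b ≤ j) :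
    ((B + A.filter (j < ·)).map (· - 1)).filter (· < j) = B.map (· - 1) := by
  have hsmall : (B.map (· - 1)).filter (· < j) = B.map (· - 1) := by
    refine Multiset.filter_eq_self.mpr fun _ hc => ?_
    obtain ⟨b, hb, rfl⟩ := Multiset.mem_map.mp hc
    have := hB b hb
    omega
  have hlarge : ((A.filter (j < ·)).map (· - 1)).filter (· < j) = 0 := by
    refine Multiset.filter_eq_nil.mpr fun _ hc => ?_
    obtain ⟨a, ha, rfl⟩ := Multiset.mem_map.mp hc
    have := (Multiset.mem_filter.mp ha).2
    omega
  rw [Multiset.map_add, Multiset.filter_add, hsmall, hlarge, add_zero]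

lemma filter_le_map_pred (hB : ∀ b ∈ B, 0 < b ∧ b ≤ j) :
    ((B + A.filter (j < ·)).map (· - 1)).filter (j ≤ ·) = (A.filter (j < ·)).map (· - 1) := by
  have hsmall : (B.map (· - 1)).filter (j ≤ ·) = 0 := by
    refine Multiset.filter_eq_nil.mpr fun _ hc => ?_
    obtain ⟨b, hb, rfl⟩ := Multiset.mem_map.mp hc
    have := hB b hb
    omega
  have hlarge :
      ((A.filter (j < ·)).map (· - 1)).filter (j ≤ ·) = (A.filter (j < ·)).map (· - 1) := by
    refine Multiset.filter_eq_self.mpr fun _ hc => ?_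
    obtain ⟨a, ha, rfl⟩ := Multiset.mem_map.mp hc
    have := (Multiset.mem_filter.mp ha).2
    omega
  rw [Multiset.map_add, Multiset.filter_add, hsmall, hlarge, zero_add]

lemma filter_two_le_delta (hj : 1 ≤ j) (hA : ∀ a ∈ A, 0 < a) :
    (delta m j A B).filter (2 ≤ ·) = (j + 1) ::ₘ ((A.filter (· ≤ j)).map (· + 1) + padDelta m) := by
  have hsmall :
      ((A.filter (· ≤ j)).map (· + 1)).filter (2 ≤ ·) = (A.filter (· ≤ j)).map (· + 1) := by
    refine Multiset.filter_eq_self.mpr fun _ hd => ?_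
    obtain ⟨a, ha, rfl⟩ := Multiset.mem_map.mp hd
    have := hA a (Multiset.mem_of_mem_filter ha)
    omega
  have hpad : (padDelta m).filter (2 ≤ ·) = padDelta m :=
    Multiset.filter_eq_self.mpr fun _ hd => (eq_two_of_mem_padDelta hd).ge
  have hones : (Multiset.replicate (onesCount m j A B) 1).filter (2 ≤ ·) = 0 :=
    Multiset.filter_eq_nil.mpr fun _ hd => by rw [Multiset.eq_of_mem_replicate hd]; omega
  rw [delta, Multiset.filter_cons_of_pos _ (by omega), Multiset.filter_add, Multiset.filter_add,
    hsmall, hpad, hones, add_zero]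

lemma eq_of_gamma_eq_of_delta_eq (hj : 1 ≤ j) (hA : ∀ a ∈ A, 0 < a) (hA' : ∀ a ∈ A', 0 < a)
    (hB : ∀ b ∈ B, 0 < b ∧ b ≤ j) (hB' : ∀ b ∈ B', 0 < b ∧ b ≤ j)
    (hγ : gamma m j A B = gamma m j A' B') (hδ : delta m j A B = delta m j A' B') :
    A = A' ∧ B = B' := by
  have hγ' := add_right_cancel hγ
  have hlarge_pos (A : Multiset ℕ) : ∀ a ∈ A.filter (j < ·), 0 < a := fun a ha => by
    have := (Multiset.mem_filter.mp ha).2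
    omega
  have hB_eq : B = B' := Multiset.map_pred_injOn (fun b hb => (hB b hb).1)
    (fun b hb => (hB' b hb).1) <| by
      rw [← filter_lt_map_pred (A := A) hB, ← filter_lt_map_pred (A := A') hB', hγ']
  have hlarge : A.filter (j < ·) = A'.filter (j < ·) :=
    Multiset.map_pred_injOn (hlarge_pos A) (hlarge_pos A') <| by
      rw [← filter_le_map_pred hB, ← filter_le_map_pred hB', hγ']
  have hsmall : A.filter (· ≤ j) = A'.filter (· ≤ j) := by
    have := congrArg (Multiset.filter (2 ≤ ·)) hδ
    rw [filter_two_le_delta hj hA, filter_two_le_delta hj hA', Multiset.cons_inj_right] at this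
    exact Multiset.map_injective (add_left_injective 1) (add_right_cancel this)
  refine ⟨?_, hB_eq⟩
  rw [← filter_lt_add_filter_le j A, ← filter_lt_add_filter_le j A', hlarge, hsmall]

end Injectivity

def coreA (m : ℕ) (x : ℕ × Multiset ℕ × Multiset ℕ) : Multiset ℕ :=
  (x.2.1.erase (m + x.1)).erase (m + x.1)

def coreB (x : ℕ × Multiset ℕ × Multiset ℕ) : Multiset ℕ :=
  x.2.2.erase x.1

def toP5 (m : ℕ) (x : ℕ × Multiset ℕ × Multiset ℕ) : ℕ × Multiset ℕ × Multiset ℕ :=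
  (x.1 + 1, gamma m x.1 (coreA m x) (coreB x), delta m x.1 (coreA m x) (coreB x))

section Q5

variable {m n : ℕ} {x : ℕ × Multiset ℕ × Multiset ℕ}

lemma eq_and_isQ5Core_of_mem_Q5 (hx : x ∈ Q5 m n) :
    x = (x.1, (m + x.1) ::ₘ (m + x.1) ::ₘ coreA m x, x.1 ::ₘ coreB x) ∧
      IsQ5Core m x.1 (coreA m x) (coreB x) n := by
  obtain ⟨j, α, β⟩ := x
  obtain ⟨hj, hαpos, -, -, hβle, hsum, hβ1, hcard, hα1, hα2, hα3, hβmin⟩ := hx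
  dsimp only [coreA, coreB] at *
  have hv : 0 < m + j := by omega
  have hβ := cons_erase_of_partAt_one_eq hβ1 hj
  have hα₁ := cons_erase_of_partAt_one_eq hα1 hv
  have hα'1 : partAt (α.erase (m + j)) 1 = m + j :=
    (partAt_erase_of_partAt_one_eq hα1 hv le_rfl).trans hα2
  have hα₂ := cons_erase_of_partAt_one_eq hα'1 hv
  have hA1 : partAt ((α.erase (m + j)).erase (m + j)) 1 < m + j := by
    rwa [partAt_erase_of_partAt_one_eq hα'1 hv le_rfl,
      partAt_erase_of_partAt_one_eq hα1 hv (by norm_num)]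
  have hβ2 := natCast_le_sMin_iff.mp hβmin
  rw [← hα₁, ← hα₂, ← hβ] at hcard hsum
  simp only [Multiset.card_cons, Multiset.sum_cons] at hcard hsum
  refine ⟨by rw [hα₂, hα₁, hβ], hj, fun a ha => hαpos a (Multiset.mem_of_mem_erase
      (Multiset.mem_of_mem_erase ha)), fun a ha => (le_partAt_one ha).trans_lt hA1,
    fun b hb => hβ2 b (Multiset.mem_of_mem_erase hb),
    fun b hb => hβle b (Multiset.mem_of_mem_erase hb), by omega, by omega⟩

lemma toP5_mem_P5 (hm : 1 ≤ m) (hx : x ∈ Q5 m n) : toP5 m x ∈ P5 m n :=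
  (eq_and_isQ5Core_of_mem_Q5 hx).2.mem_P5 hm

lemma toP5_injOn : Set.InjOn (toP5 m) (Q5 m n) := by
  rintro ⟨j, α, β⟩ hx ⟨j', α', β'⟩ hy hxy
  obtain ⟨hx_eq, hcx⟩ := eq_and_isQ5Core_of_mem_Q5 hx
  obtain ⟨hy_eq, hcy⟩ := eq_and_isQ5Core_of_mem_Q5 hy
  simp only [toP5, Prod.mk.injEq, Nat.add_right_cancel_iff] at hxy
  obtain ⟨rfl, hγ, hδ⟩ := hxy
  obtain ⟨hA, hB⟩ := eq_of_gamma_eq_of_delta_eq hcx.one_le hcx.pos_of_mem_A hcy.pos_of_mem_A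
    hcx.pos_and_le_of_mem_B hcy.pos_and_le_of_mem_B hγ hδ
  rw [hx_eq, hy_eq, hA, hB]

end Q5

/-- For all integers m ≥ 1 and n ≥ 0, #Q₅(m,n) ≤ #P₅(-m,n). -/
theorem Q5_card_le_P5_card (m n : ℕ) (hm : 1 ≤ m) :
    Nat.card (Q5 m n) ≤ Nat.card (P5 m n) := by
  rw [Nat.card_coe_set_eq, Nat.card_coe_set_eq]
  exact Set.ncard_le_ncard_of_injOn (toP5 m) (fun _ => toP5_mem_P5 hm) toP5_injOn
    (P5_finite m n)
end
end
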